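/- Let 𝓗 be a finite-dimensional complex inner product space of dimension ≥ 2 and Γ a positive natural number. Let G be a self-adjoint endomorphism of 𝓗 such that ψ is a unit vector with G ψ = 0, the eigenspace for eigenvalue 0 is one-dimensional, every nonzero eigenvalue of G is ≥ 1, and ‖G‖ ≤ Γ. Let δ' be a real with 0 < δ' < 1/2 and let G' be a self-adjoint endomorphism with ‖G − G'‖ ≤ δ'. Then: (i) the smallest eigenvalue E₀' of G' satisfies −δ' ≤ E₀' ≤ δ' and its eigenspace is one-dimensional; (ii) the smallest eigenvalue E₁' of G' distinct from E₀' satisfies E₁' − E₀' ≥ 1 − 2δ'; (iii) any unit eigenvector ψ' of G' for E₀' satisfies |⟨ψ, ψ'⟩| ≥ 1 − δ'/(1 − δ'); (iv) ‖P_ψ − P_{ψ'}‖₁ ≤ 2·√(2δ'/(1 − δ')); and (v) for every positive semidefinite ρ with trace 1, 1 − ⟨ψ', ρψ'⟩ ≤ (Tr(ρ∘G') + δ')/(1 − 2δ'). -/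

import Mathlib

open scoped ComplexOrder

noncomputable section

variable {𝓗 : Type*} [NormedAddCommGroup 𝓗] [InnerProductSpace ℂ 𝓗] [FiniteDimensional ℂ 𝓗]

/-- The operator norm of a linear endomorphism of a finite-dimensional complex
inner product space. -/
def endOpNorm (T : 𝓗 →ₗ[ℂ] 𝓗) : ℝ := ‖LinearMap.toContinuousLinearMap T‖

/-- The trace norm (sum of singular values) of a linear endomorphism of a
finite-dimensional complex inner product space, computed as `Tr √(TᴴT)` via the
matrix of `T` in an orthonormal basis. -/
def endTraceNorm (T : 𝓗 →ₗ[ℂ] 𝓗) : ℝ :=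
  (((Matrix.posSemidef_conjTranspose_mul_self
      (LinearMap.toMatrix (stdOrthonormalBasis ℂ 𝓗).toBasis
        (stdOrthonormalBasis ℂ 𝓗).toBasis T)).1.eigenvectorUnitary.1 *
    Matrix.diagonal (((↑) : ℝ → ℂ) ∘ (√·) ∘ (Matrix.posSemidef_conjTranspose_mul_self
      (LinearMap.toMatrix (stdOrthonormalBasis ℂ 𝓗).toBasis
        (stdOrthonormalBasis ℂ 𝓗).toBasis T)).1.eigenvalues) *
    (star (Matrix.posSemidef_conjTranspose_mul_self
      (LinearMap.toMatrix (stdOrthonormalBasis ℂ 𝓗).toBasis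
        (stdOrthonormalBasis ℂ 𝓗).toBasis T)).1.eigenvectorUnitary :
      Matrix (Fin (Module.finrank ℂ 𝓗)) (Fin (Module.finrank ℂ 𝓗)) ℂ)).trace).re

/-- The orthogonal projection onto the span of a unit vector `ψ`: `v ↦ ⟨ψ, v⟩ • ψ`. -/
def vecProj (ψ : 𝓗) : 𝓗 →ₗ[ℂ] 𝓗 := LinearMap.smulRight (innerSL ℂ ψ).toLinearMap ψ


local notation "⟪" x ", " y "⟫" => @inner ℂ _ _ x y

set_option linter.unusedSectionVars false
set_option maxHeartbeats 1000000
set_option synthInstance.maxHeartbeats 200000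

lemma my_conj_mul (z w : ℂ) (h : w = (starRingEnd ℂ) z) : w * z = ((‖z‖ ^ 2 : ℝ) : ℂ) := by
  rw [h, RCLike.conj_mul]; norm_cast

lemma my_inner_mul_inner (v w : 𝓗) : ⟪v, w⟫ * ⟪w, v⟫ = ((‖⟪w, v⟫‖ ^ 2 : ℝ) : ℂ) :=
  my_conj_mul _ _ (by rw [inner_conj_symm])

lemma my_trace_eq_sum_inner {ι : Type*} [Fintype ι] [DecidableEq ι]
    (b : OrthonormalBasis ι ℂ 𝓗) (T : 𝓗 →ₗ[ℂ] 𝓗) :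
    LinearMap.trace ℂ 𝓗 T = ∑ i, ⟪b i, T (b i)⟫ := by
  rw [LinearMap.trace_eq_matrix_trace ℂ b.toBasis, Matrix.trace]
  congr 1
  ext i
  rw [Matrix.diag, LinearMap.toMatrix_apply]
  simp [OrthonormalBasis.coe_toBasis_repr_apply, b.repr_apply_apply]

lemma my_diag_inner {ι : Type*} [Fintype ι] [DecidableEq ι]
    (b : OrthonormalBasis ι ℂ 𝓗) (T : 𝓗 →ₗ[ℂ] 𝓗) (lam : ι → ℝ)
    (hTb : ∀ i, T (b i) = (lam i : ℂ) • b i) (v : 𝓗) (i : ι) :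
    ⟪b i, T v⟫ = (lam i : ℂ) * ⟪b i, v⟫ := by
  conv_lhs => rw [← b.sum_repr' v]
  rw [map_sum, inner_sum]
  simp_rw [map_smul, hTb, smul_smul, inner_smul_right]
  rw [Finset.sum_eq_single i]
  · have : ⟪b i, b i⟫ = 1 := by
      rw [inner_self_eq_norm_sq_to_K, b.orthonormal.1 i]; norm_num
    rw [this]; ring
  · intro j _ hj
    have : ⟪b i, b j⟫ = 0 := b.orthonormal.2 (Ne.symm hj)
    simp [this]
  · simp

lemma my_quad_form {ι : Type*} [Fintype ι] [DecidableEq ι]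
    (b : OrthonormalBasis ι ℂ 𝓗) (T : 𝓗 →ₗ[ℂ] 𝓗) (lam : ι → ℝ)
    (hTb : ∀ i, T (b i) = (lam i : ℂ) • b i) (v : 𝓗) :
    (⟪v, T v⟫ : ℂ) = ((∑ i, lam i * ‖⟪b i, v⟫‖ ^ 2 : ℝ) : ℂ) := by
  rw [← b.sum_inner_mul_inner v (T v)]
  push_cast
  congr 1
  ext i
  rw [my_diag_inner b T lam hTb v i,
    show ⟪v, b i⟫ * ((lam i : ℂ) * ⟪b i, v⟫) = (lam i : ℂ) * (⟪v, b i⟫ * ⟪b i, v⟫) by ring,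
    my_inner_mul_inner]
  push_cast; ring

lemma my_parseval {ι : Type*} [Fintype ι] [DecidableEq ι]
    (b : OrthonormalBasis ι ℂ 𝓗) (v : 𝓗) :
    (∑ i, ‖⟪b i, v⟫‖ ^ 2 : ℝ) = ‖v‖ ^ 2 := by
  have h := b.sum_inner_mul_inner v v
  simp_rw [fun i => my_inner_mul_inner v (b i)] at h
  rw [inner_self_eq_norm_sq_to_K] at h
  have h2 : ((∑ i, ‖⟪b i, v⟫‖ ^ 2 : ℝ) : ℂ) = ((‖v‖ ^ 2 : ℝ) : ℂ) := by push_cast at h ⊢; exact h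
  exact_mod_cast h2

lemma my_inner_le_opnorm (T : 𝓗 →ₗ[ℂ] 𝓗) (v : 𝓗) (hv : ‖v‖ = 1) :
    ‖⟪v, T v⟫‖ ≤ endOpNorm T := by
  calc ‖⟪v, T v⟫‖ ≤ ‖v‖ * ‖T v‖ := norm_inner_le_norm v (T v)
    _ = ‖(LinearMap.toContinuousLinearMap T) v‖ := by simp [hv]
    _ ≤ ‖LinearMap.toContinuousLinearMap T‖ * ‖v‖ :=
        (LinearMap.toContinuousLinearMap T).le_opNorm v
    _ = endOpNorm T := by simp [hv, endOpNorm]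

lemma my_re_inner_le_opnorm (T : 𝓗 →ₗ[ℂ] 𝓗) (v : 𝓗) (hv : ‖v‖ = 1) :
    |(⟪v, T v⟫ : ℂ).re| ≤ endOpNorm T :=
  le_trans (Complex.abs_re_le_norm _) (my_inner_le_opnorm T v hv)

lemma my_norm_combo (u w : 𝓗) (hu : ‖u‖ = 1) (hw : ‖w‖ = 1) (huw : ⟪u, w⟫ = 0)
    (a b : ℂ) : ‖a • u + b • w‖ ^ 2 = ‖a‖ ^ 2 + ‖b‖ ^ 2 := by
  rw [norm_add_sq (𝕜 := ℂ)]
  have h0 : (⟪a • u, b • w⟫ : ℂ) = 0 := by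
    rw [inner_smul_left, inner_smul_right, huw]; ring
  rw [h0]
  simp [norm_smul, hu, hw]

lemma my_exists_perp (ψ u w : 𝓗) (hu : ‖u‖ = 1) (hw : ‖w‖ = 1) (huw : ⟪u, w⟫ = 0) :
    ∃ a b : ℂ, ‖a‖ ^ 2 + ‖b‖ ^ 2 = 1 ∧ ⟪ψ, a • u + b • w⟫ = 0 ∧ ‖a • u + b • w‖ = 1 := by
  have key : ∀ a b : ℂ, ‖a‖ ^ 2 + ‖b‖ ^ 2 = 1 → ⟪ψ, a • u + b • w⟫ = 0 →
      (∃ a' b' : ℂ, ‖a'‖ ^ 2 + ‖b'‖ ^ 2 = 1 ∧ ⟪ψ, a' • u + b' • w⟫ = 0 ∧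
        ‖a' • u + b' • w‖ = 1) := by
    intro a b h1 h2
    refine ⟨a, b, h1, h2, ?_⟩
    have := my_norm_combo u w hu hw huw a b
    rw [h1] at this
    nlinarith [norm_nonneg (a • u + b • w)]
  set p : ℂ := ⟪ψ, u⟫ with hp
  set q : ℂ := ⟪ψ, w⟫ with hq
  by_cases hpq : p = 0 ∧ q = 0
  · refine key 1 0 (by norm_num) ?_
    simp [inner_add_right, inner_smul_right, ← hp, ← hq, hpq.1, hpq.2]
  · have hr2 : 0 < ‖p‖ ^ 2 + ‖q‖ ^ 2 := by
      rcases not_and_or.mp hpq with h | h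
      · have : 0 < ‖p‖ := norm_pos_iff.mpr h
        positivity
      · have : 0 < ‖q‖ := norm_pos_iff.mpr h
        positivity
    set r : ℝ := Real.sqrt (‖p‖ ^ 2 + ‖q‖ ^ 2) with hrdef
    have hr : 0 < r := Real.sqrt_pos.mpr hr2
    have hrsq : r ^ 2 = ‖p‖ ^ 2 + ‖q‖ ^ 2 := Real.sq_sqrt hr2.le
    refine key ((q / r : ℂ)) (-(p / r : ℂ)) ?_ ?_
    · rw [norm_neg]
      rw [norm_div, norm_div]
      simp only [Complex.norm_real, Real.norm_eq_abs, abs_of_pos hr]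
      rw [div_pow, div_pow]
      rw [← add_div, hrsq]
      rw [add_comm (‖q‖ ^ 2)]
      exact div_self (ne_of_gt hr2)
    · rw [inner_add_right, inner_smul_right, inner_smul_right, ← hp, ← hq]
      field_simp
      ring


lemma my_unique_index {n : ℕ} (b : OrthonormalBasis (Fin n) ℂ 𝓗) (T : 𝓗 →ₗ[ℂ] 𝓗)
    (lam : Fin n → ℝ) (hTb : ∀ i, T (b i) = (lam i : ℂ) • b i) (μ : ℝ)
    (hdim1 : Module.finrank ℂ (Module.End.eigenspace T (μ : ℂ)) = 1)
    (ξ : 𝓗) (hξn : ‖ξ‖ = 1) (hξ : T ξ = (μ : ℂ) • ξ) :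
    ∃ i0, lam i0 = μ ∧ (∀ i, i ≠ i0 → lam i ≠ μ) ∧ (∀ i, i ≠ i0 → ⟪b i, ξ⟫ = 0) ∧
      ‖⟪b i0, ξ⟫‖ = 1 := by
  classical
  have hzero : ∀ i, lam i ≠ μ → ⟪b i, ξ⟫ = 0 := by
    intro i hne
    have h1 : ⟪b i, T ξ⟫ = (lam i : ℂ) * ⟪b i, ξ⟫ := my_diag_inner b T lam hTb ξ i
    rw [hξ, inner_smul_right] at h1
    have h2 : ((lam i : ℂ) - (μ : ℂ)) * ⟪b i, ξ⟫ = 0 := by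
      rw [sub_mul, h1]; ring
    rcases mul_eq_zero.mp h2 with h | h
    · exfalso; apply hne
      have := sub_eq_zero.mp h
      exact_mod_cast this
    · exact h
  have hmem : ∀ i, lam i = μ → b i ∈ Module.End.eigenspace T (μ : ℂ) := by
    intro i hi
    rw [Module.End.mem_eigenspace_iff, hTb i, hi]
  have hatmost : ∀ i j, lam i = μ → lam j = μ → i = j := by
    intro i j hi hj
    by_contra hij
    set s : Finset (Fin n) := {i, j} with hs
    have hcard : s.card = 2 := Finset.card_pair hij
    have hmem' : ∀ x : s, (b x : 𝓗) ∈ Module.End.eigenspace T (μ : ℂ) := by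
      rintro ⟨x, hx⟩
      rcases Finset.mem_insert.mp hx with h | h
      · exact h ▸ hmem i hi
      · exact (Finset.mem_singleton.mp h) ▸ hmem j hj
    set f : s → Module.End.eigenspace T (μ : ℂ) := fun x => ⟨b x, hmem' x⟩ with hf
    have hli : LinearIndependent ℂ f := by
      have hcomp : LinearIndependent ℂ ((Module.End.eigenspace T (μ : ℂ)).subtype ∘ f) := by
        have : ((Module.End.eigenspace T (μ : ℂ)).subtype ∘ f) = b ∘ (Subtype.val : s → Fin n) := rfl
        rw [this]
        exact b.orthonormal.linearIndependent.comp Subtype.val Subtype.val_injective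
      exact LinearIndependent.of_comp _ hcomp
    have := hli.fintype_card_le_finrank
    rw [hdim1, Fintype.card_coe, hcard] at this
    omega
  have hex : ∃ i, lam i = μ := by
    by_contra hno
    push_neg at hno
    have hall : ∀ i, ⟪b i, ξ⟫ = 0 := fun i => hzero i (hno i)
    have := my_parseval b ξ
    rw [hξn] at this
    simp only [hall, norm_zero] at this
    norm_num at this
  obtain ⟨i0, hi0⟩ := hex
  refine ⟨i0, hi0, fun i hi hcon => hi (hatmost i i0 hcon hi0), fun i hi =>
    hzero i (fun hcon => hi (hatmost i i0 hcon hi0)), ?_⟩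
  have := my_parseval b ξ
  rw [hξn, Finset.sum_eq_single i0] at this
  · nlinarith [norm_nonneg (⟪b i0, ξ⟫ : ℂ)]
  · intro j _ hj
    rw [hzero j (fun hcon => hj (hatmost j i0 hcon hi0)), norm_zero]
    norm_num
  · simp

lemma my_eig_inner (T : 𝓗 →ₗ[ℂ] 𝓗) (μ : ℝ) (ξ : 𝓗) (hξn : ‖ξ‖ = 1)
    (hξ : T ξ = (μ : ℂ) • ξ) : (⟪ξ, T ξ⟫ : ℂ) = (μ : ℂ) := by
  rw [hξ, inner_smul_right, inner_self_eq_norm_sq_to_K, hξn]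
  norm_num

lemma my_exists_unit_eigenvector (T : 𝓗 →ₗ[ℂ] 𝓗) (μ : ℝ)
    (h : Module.End.HasEigenvalue T (μ : ℂ)) :
    ∃ ξ : 𝓗, ‖ξ‖ = 1 ∧ T ξ = (μ : ℂ) • ξ := by
  obtain ⟨v, hv, hv0⟩ := h.exists_hasEigenvector
  have hvn : ‖v‖ ≠ 0 := norm_ne_zero_iff.mpr hv0
  refine ⟨(‖v‖ : ℂ)⁻¹ • v, ?_, ?_⟩
  · rw [norm_smul]
    simp [hvn]
  · have heq : T v = (μ : ℂ) • v := Module.End.mem_eigenspace_iff.mp hv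
    rw [map_smul, heq, smul_comm]

lemma my_inner_sub_split (A B : 𝓗 →ₗ[ℂ] 𝓗) (v : 𝓗) :
    (⟪v, A v⟫ : ℂ).re = (⟪v, B v⟫ : ℂ).re + (⟪v, (A - B) v⟫ : ℂ).re := by
  have : ((A - B) v) = A v - B v := rfl
  rw [this, inner_sub_right]
  simp


lemma my_rayleigh_lower (T : 𝓗 →ₗ[ℂ] 𝓗) (hTsym : T.IsSymmetric) (c : ℝ)
    (hmin : ∀ μ : ℂ, Module.End.HasEigenvalue T μ → c ≤ μ.re)
    (v : 𝓗) (hv : ‖v‖ = 1) : c ≤ (⟪v, T v⟫ : ℂ).re := by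
  classical
  set b := hTsym.eigenvectorBasis rfl with hb
  set lam := hTsym.eigenvalues rfl with hlam
  have hTb : ∀ i, T (b i) = (lam i : ℂ) • b i := fun i => hTsym.apply_eigenvectorBasis rfl i
  have hq := my_quad_form b T lam hTb v
  have hre : (⟪v, T v⟫ : ℂ).re = ∑ i, lam i * ‖⟪b i, v⟫‖ ^ 2 := by
    rw [hq, Complex.ofReal_re]
  rw [hre]
  have hper := my_parseval b v
  rw [hv, one_pow] at hper
  calc c = c * ∑ i, ‖⟪b i, v⟫‖ ^ 2 := by rw [hper, mul_one]
    _ = ∑ i, c * ‖⟪b i, v⟫‖ ^ 2 := Finset.mul_sum _ _ _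
    _ ≤ ∑ i, lam i * ‖⟪b i, v⟫‖ ^ 2 := by
        apply Finset.sum_le_sum
        intro i _
        have hev := hmin (lam i : ℂ) (hTsym.hasEigenvalue_eigenvalues rfl i)
        rw [Complex.ofReal_re] at hev
        nlinarith [sq_nonneg (‖⟪b i, v⟫‖ : ℝ)]

lemma my_G_lower (G : 𝓗 →ₗ[ℂ] 𝓗) (hGsym : G.IsSymmetric) (ψ : 𝓗) (hψ : ‖ψ‖ = 1)
    (hGψ : G ψ = 0)
    (heig : Module.finrank ℂ (Module.End.eigenspace G (0 : ℂ)) = 1)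
    (hgap : ∀ μ : ℂ, Module.End.HasEigenvalue G μ → μ ≠ 0 → 1 ≤ μ.re)
    (v : 𝓗) : ‖v‖ ^ 2 - ‖⟪ψ, v⟫‖ ^ 2 ≤ (⟪v, G v⟫ : ℂ).re := by
  classical
  set b := hGsym.eigenvectorBasis rfl with hb
  set lam := hGsym.eigenvalues rfl with hlamdef
  have hTb : ∀ i, G (b i) = (lam i : ℂ) • b i := fun i => hGsym.apply_eigenvectorBasis rfl i
  have heig' : Module.finrank ℂ (Module.End.eigenspace G ((0 : ℝ) : ℂ)) = 1 := by
    rw [Complex.ofReal_zero]; exact heig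
  have hGψ' : G ψ = ((0 : ℝ) : ℂ) • ψ := by rw [hGψ]; simp
  obtain ⟨i0, hi0, hunique, hc, hnorm1⟩ := my_unique_index b G lam hTb 0 heig' ψ hψ hGψ'
  have hlam1 : ∀ i, i ≠ i0 → 1 ≤ lam i := by
    intro i hi
    have hne : ((lam i : ℂ)) ≠ 0 := by
      rw [Ne, Complex.ofReal_eq_zero]
      exact hunique i hi
    have := hgap (lam i : ℂ) (hGsym.hasEigenvalue_eigenvalues rfl i) hne
    rwa [Complex.ofReal_re] at this
  have hre : (⟪v, G v⟫ : ℂ).re = ∑ i, lam i * ‖⟪b i, v⟫‖ ^ 2 := by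
    rw [my_quad_form b G lam hTb v, Complex.ofReal_re]
  -- ⟪ψ, v⟫ in terms of the i0 coordinate
  have hpsiv : ‖(⟪ψ, v⟫ : ℂ)‖ = ‖(⟪b i0, v⟫ : ℂ)‖ := by
    have hsum := b.sum_inner_mul_inner ψ v
    rw [Finset.sum_eq_single i0] at hsum
    · rw [← hsum, norm_mul]
      have : ‖(⟪ψ, b i0⟫ : ℂ)‖ = 1 := by
        rw [← norm_inner_symm]
        exact hnorm1
      rw [this, one_mul]
    · intro j _ hj
      have : (⟪ψ, b j⟫ : ℂ) = 0 := by
        rw [← inner_conj_symm ψ (b j), hc j hj, map_zero]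
      rw [this, zero_mul]
    · simp
  have hper := my_parseval b v
  have herase : ∑ i ∈ Finset.univ.erase i0, ‖⟪b i, v⟫‖ ^ 2
      = ‖v‖ ^ 2 - ‖⟪b i0, v⟫‖ ^ 2 := by
    have h1 := Finset.add_sum_erase Finset.univ (fun i => ‖⟪b i, v⟫‖ ^ 2) (Finset.mem_univ i0)
    rw [hper] at h1
    have h2 : ‖⟪b i0, v⟫‖ ^ 2 + ∑ x ∈ Finset.univ.erase i0, ‖⟪b x, v⟫‖ ^ 2 = ‖v‖ ^ 2 := h1
    linarith
  rw [hre, ← Finset.add_sum_erase Finset.univ _ (Finset.mem_univ i0), hi0, hpsiv]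
  have hstep : ∑ i ∈ Finset.univ.erase i0, ‖⟪b i, v⟫‖ ^ 2
      ≤ ∑ i ∈ Finset.univ.erase i0, lam i * ‖⟪b i, v⟫‖ ^ 2 := by
    apply Finset.sum_le_sum
    intro i hi
    have := hlam1 i (Finset.ne_of_mem_erase hi)
    nlinarith [sq_nonneg (‖⟪b i, v⟫‖ : ℝ)]
  rw [zero_mul, zero_add]
  linarith


lemma my_vecProj_apply (x v : 𝓗) : vecProj x v = (⟪x, v⟫ : ℂ) • x := rfl

lemma my_toMatrix_onb {ι : Type*} [Fintype ι] [DecidableEq ι]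
    (e : OrthonormalBasis ι ℂ 𝓗) (f : 𝓗 →ₗ[ℂ] 𝓗) (i j : ι) :
    (LinearMap.toMatrix e.toBasis e.toBasis f) i j = ⟪e i, f (e j)⟫ := by
  rw [LinearMap.toMatrix_apply]
  simp [OrthonormalBasis.coe_toBasis_repr_apply, OrthonormalBasis.repr_apply_apply]

lemma my_toMatrix_hermitian {ι : Type*} [Fintype ι] [DecidableEq ι]
    (e : OrthonormalBasis ι ℂ 𝓗) (f : 𝓗 →ₗ[ℂ] 𝓗) (hf : f.IsSymmetric) :
    (LinearMap.toMatrix e.toBasis e.toBasis f).IsHermitian := by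
  ext i j
  rw [Matrix.conjTranspose_apply, my_toMatrix_onb, my_toMatrix_onb]
  rw [RCLike.star_def, inner_conj_symm]
  exact hf (e i) (e j)

lemma my_dot_eq_inner {ι : Type*} [Fintype ι] [DecidableEq ι]
    (e : OrthonormalBasis ι ℂ 𝓗) (f : 𝓗 →ₗ[ℂ] 𝓗) (x : ι → ℂ) :
    dotProduct (star x) (Matrix.mulVec (LinearMap.toMatrix e.toBasis e.toBasis f) x)
      = ⟪e.toBasis.equivFun.symm x, f (e.toBasis.equivFun.symm x)⟫ := by
  set v := e.toBasis.equivFun.symm x with hv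
  have hx : e.toBasis.repr v = x := by
    rw [hv]; exact e.toBasis.equivFun.apply_symm_apply x
  have hmv : Matrix.mulVec (LinearMap.toMatrix e.toBasis e.toBasis f) x = e.toBasis.repr (f v) := by
    conv_lhs => rw [← hx]
    exact LinearMap.toMatrix_mulVec_repr _ _ _ _
  rw [hmv, dotProduct]
  rw [← e.sum_inner_mul_inner v (f v)]
  congr 1
  ext i
  rw [Pi.star_apply, ← hx]
  rw [show (e.toBasis.repr v) i = ⟪e i, v⟫ from
    (e.coe_toBasis_repr_apply v i).trans (e.repr_apply_apply v i)]
  rw [show (e.toBasis.repr (f v)) i = ⟪e i, f v⟫ from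
    (e.coe_toBasis_repr_apply (f v) i).trans (e.repr_apply_apply (f v) i)]
  rw [← inner_conj_symm v (e i)]
  rfl

open scoped MatrixOrder in
lemma my_traceNorm_symmetric_eq (T : 𝓗 →ₗ[ℂ] 𝓗) (hT : T.IsSymmetric) :
    endTraceNorm T = ∑ i, |hT.eigenvalues rfl i| := by
  classical
  set e := stdOrthonormalBasis ℂ 𝓗 with he
  set b := hT.eigenvectorBasis rfl with hb
  set lam := hT.eigenvalues rfl with hlamdef
  have hTb : ∀ i, T (b i) = (lam i : ℂ) • b i := fun i => hT.apply_eigenvectorBasis rfl i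
  set A : 𝓗 →ₗ[ℂ] 𝓗 := ∑ i, (Complex.ofReal |lam i|) • vecProj (b i) with hA
  have hApt : ∀ v : 𝓗, A v = ∑ i, (Complex.ofReal |lam i|) • ((⟪b i, v⟫ : ℂ) • b i) := by
    intro v
    rw [hA, LinearMap.sum_apply]
    exact Finset.sum_congr rfl fun i _ => by rw [LinearMap.smul_apply, my_vecProj_apply]
  have hAb : ∀ j, A (b j) = (Complex.ofReal |lam j|) • b j := by
    intro j
    rw [hApt (b j), Finset.sum_eq_single j]
    · have : (⟪b j, b j⟫ : ℂ) = 1 := by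
        rw [inner_self_eq_norm_sq_to_K, b.orthonormal.1 j]; norm_num
      rw [this, one_smul]
    · intro i _ hi
      have : (⟪b i, b j⟫ : ℂ) = 0 := b.orthonormal.2 hi
      rw [this, zero_smul, smul_zero]
    · simp
  have hAsym : A.IsSymmetric := by
    intro x y
    rw [hApt x, hApt y, sum_inner, inner_sum]
    congr 1
    ext i
    simp only [inner_smul_left, inner_smul_right]
    rw [Complex.conj_ofReal]
    rw [← inner_conj_symm x (b i)]
    ring
  set M := LinearMap.toMatrix e.toBasis e.toBasis T with hM
  set S := LinearMap.toMatrix e.toBasis e.toBasis A with hS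
  have hSpsd : S.PosSemidef := by
    refine Matrix.PosSemidef.of_dotProduct_mulVec_nonneg ?_ ?_
    · exact my_toMatrix_hermitian e A hAsym
    · intro x
      rw [hS, my_dot_eq_inner e A x]
      set v := e.toBasis.equivFun.symm x with hv
      rw [my_quad_form b A (fun i => |lam i|) hAb v]
      rw [Complex.zero_le_real]
      apply Finset.sum_nonneg
      intro i _
      positivity
  have hsq : S ^ 2 = M.conjTranspose * M := by
    have hMh : M.conjTranspose = M := my_toMatrix_hermitian e T hT
    rw [hMh, pow_two, hS, hM, ← LinearMap.toMatrix_comp e.toBasis e.toBasis e.toBasis,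
      ← LinearMap.toMatrix_comp e.toBasis e.toBasis e.toBasis]
    congr 1
    apply b.toBasis.ext
    intro j
    rw [OrthonormalBasis.coe_toBasis]
    rw [LinearMap.comp_apply, LinearMap.comp_apply, hAb, map_smul, hAb, hTb, map_smul, hTb,
      smul_smul, smul_smul]
    congr 1
    rw [← Complex.ofReal_mul, ← Complex.ofReal_mul, ← abs_mul, abs_mul_self]
  have htr : S.trace = LinearMap.trace ℂ 𝓗 A := by
    rw [hS, ← LinearMap.trace_eq_matrix_trace]
  have hfinal : endTraceNorm T = S.trace.re := by
    have hP := Matrix.posSemidef_conjTranspose_mul_self M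
    have h2 : CFC.sqrt (S ^ 2) = S := CFC.sqrt_sq S hSpsd.nonneg
    rw [CFC.sqrt_eq_cfc, cfc_nnreal_eq_real _ (S ^ 2), hsq, hP.1.cfc_eq] at h2
    have hf : (fun x : ℝ => ((NNReal.sqrt x.toNNReal : NNReal) : ℝ)) = Real.sqrt := by
      funext x; unfold Real.sqrt; rfl
    rw [hf] at h2
    rw [endTraceNorm, ← h2, Matrix.IsHermitian.cfc, Unitary.conjStarAlgAut_apply]
    rfl
  rw [hfinal, htr, my_trace_eq_sum_inner b A]
  have : ∀ i, (⟪b i, A (b i)⟫ : ℂ) = Complex.ofReal |lam i| := by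
    intro i
    rw [hAb, inner_smul_right, inner_self_eq_norm_sq_to_K, b.orthonormal.1 i]
    norm_num
  simp_rw [this]
  rw [← Complex.ofReal_sum]
  rw [Complex.ofReal_re]


lemma my_vecProj_symmetric (x : 𝓗) : (vecProj x).IsSymmetric := by
  intro u v
  rw [my_vecProj_apply, my_vecProj_apply, inner_smul_left, inner_smul_right]
  rw [← inner_conj_symm u x]
  ring

lemma my_trace_vecProj (u : 𝓗) : LinearMap.trace ℂ 𝓗 (vecProj u) = ⟪u, u⟫ := by
  rw [my_trace_eq_sum_inner (stdOrthonormalBasis ℂ 𝓗) (vecProj u)]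
  simp_rw [my_vecProj_apply, inner_smul_right]
  exact (stdOrthonormalBasis ℂ 𝓗).sum_inner_mul_inner u u

lemma my_trace_vecProj_comp (u w : 𝓗) :
    LinearMap.trace ℂ 𝓗 (vecProj u ∘ₗ vecProj w) = ⟪u, w⟫ * ⟪w, u⟫ := by
  rw [my_trace_eq_sum_inner (stdOrthonormalBasis ℂ 𝓗)]
  set e := stdOrthonormalBasis ℂ 𝓗
  have : ∀ i, (⟪e i, (vecProj u ∘ₗ vecProj w) (e i)⟫ : ℂ)
      = ⟪u, w⟫ * (⟪w, e i⟫ * ⟪e i, u⟫) := by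
    intro i
    rw [LinearMap.comp_apply]
    simp only [my_vecProj_apply, inner_smul_right]
    ring
  simp_rw [this]
  rw [← Finset.mul_sum, e.sum_inner_mul_inner w u]

lemma my_traceNorm_diff_le (ψ ψ' : 𝓗) (hψ : ‖ψ‖ = 1) (hψ' : ‖ψ'‖ = 1) :
    endTraceNorm (vecProj ψ - vecProj ψ')
      ≤ 2 * Real.sqrt (1 - ‖(⟪ψ, ψ'⟫ : ℂ)‖ ^ 2) := by
  classical
  set D : 𝓗 →ₗ[ℂ] 𝓗 := vecProj ψ - vecProj ψ' with hD
  have hDsym : D.IsSymmetric := (my_vecProj_symmetric ψ).sub (my_vecProj_symmetric ψ')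
  set b := hDsym.eigenvectorBasis rfl with hb
  set lam := hDsym.eigenvalues rfl with hlamdef
  have hDb : ∀ i, D (b i) = (lam i : ℂ) • b i := fun i => hDsym.apply_eigenvectorBasis rfl i
  set t2 : ℝ := ‖(⟪ψ, ψ'⟫ : ℂ)‖ ^ 2 with ht2
  have ht2le : t2 ≤ 1 := by
    have := norm_inner_le_norm (𝕜 := ℂ) ψ ψ'
    rw [hψ, hψ', mul_one] at this
    nlinarith [norm_nonneg (⟪ψ, ψ'⟫ : ℂ)]
  -- sum of squares of eigenvalues
  have hsumsq : ∑ i, (lam i) ^ 2 = 2 - 2 * t2 := by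
    have h1 : LinearMap.trace ℂ 𝓗 (D ∘ₗ D) = ((∑ i, (lam i) ^ 2 : ℝ) : ℂ) := by
      rw [my_trace_eq_sum_inner b (D ∘ₗ D)]
      have : ∀ i, (⟪b i, (D ∘ₗ D) (b i)⟫ : ℂ) = (((lam i) ^ 2 : ℝ) : ℂ) := by
        intro i
        rw [LinearMap.comp_apply, hDb, map_smul, hDb, smul_smul, inner_smul_right,
          inner_self_eq_norm_sq_to_K, b.orthonormal.1 i]
        push_cast; ring
      simp_rw [this]
      rw [← Complex.ofReal_sum]
    have h2 : LinearMap.trace ℂ 𝓗 (D ∘ₗ D) = ((2 - 2 * t2 : ℝ) : ℂ) := by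
      have hex : D ∘ₗ D = vecProj ψ ∘ₗ vecProj ψ - vecProj ψ ∘ₗ vecProj ψ'
          - vecProj ψ' ∘ₗ vecProj ψ + vecProj ψ' ∘ₗ vecProj ψ' := by
        rw [hD]
        ext v
        simp only [LinearMap.sub_apply, LinearMap.add_apply, LinearMap.comp_apply, map_sub]
        abel
      rw [hex, map_add, map_sub, map_sub, my_trace_vecProj_comp, my_trace_vecProj_comp,
        my_trace_vecProj_comp, my_trace_vecProj_comp]
      have hself : (⟪ψ, ψ⟫ : ℂ) = 1 := by
        rw [inner_self_eq_norm_sq_to_K, hψ]; norm_num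
      have hself' : (⟪ψ', ψ'⟫ : ℂ) = 1 := by
        rw [inner_self_eq_norm_sq_to_K, hψ']; norm_num
      have hcross : (⟪ψ, ψ'⟫ : ℂ) * ⟪ψ', ψ⟫ = ((t2 : ℝ) : ℂ) := by
        rw [ht2, ← norm_inner_symm ψ' ψ]
        exact my_inner_mul_inner ψ ψ'
      have hcross' : (⟪ψ', ψ⟫ : ℂ) * ⟪ψ, ψ'⟫ = ((t2 : ℝ) : ℂ) := by
        rw [mul_comm]; exact hcross
      rw [hself, hself', hcross, hcross']
      push_cast; ring
    have := h1.symm.trans h2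
    exact_mod_cast this
  -- at most two nonzero eigenvalues
  set s : Finset (Fin (Module.finrank ℂ 𝓗)) := Finset.univ.filter (fun i => lam i ≠ 0)
    with hsdef
  have hcard : s.card ≤ 2 := by
    set W : Submodule ℂ 𝓗 := Submodule.span ℂ ({ψ, ψ'} : Set 𝓗) with hW
    have hWrank : Module.finrank ℂ W ≤ 2 := by
      have h1 := finrank_span_le_card (R := ℂ) ({ψ, ψ'} : Set 𝓗)
      have h2 : ({ψ, ψ'} : Set 𝓗).toFinset.card ≤ 2 := by
        rw [Set.toFinset_insert, Set.toFinset_singleton]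
        exact (Finset.card_insert_le _ _).trans (by simp)
      rw [← hW] at h1
      exact h1.trans h2
    have hmemW : ∀ i : s, (b i : 𝓗) ∈ W := by
      rintro ⟨i, hi⟩
      have hlamne : lam i ≠ 0 := (Finset.mem_filter.mp hi).2
      have hDbi : D (b i) ∈ W := by
        have : D (b i) = (⟪ψ, b i⟫ : ℂ) • ψ - (⟪ψ', b i⟫ : ℂ) • ψ' := by
          rw [hD]; rfl
        rw [this]
        apply sub_mem
        · exact Submodule.smul_mem _ _ (Submodule.subset_span (by simp))
        · exact Submodule.smul_mem _ _ (Submodule.subset_span (by simp))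
      have : (b i : 𝓗) = ((lam i : ℂ))⁻¹ • D (b i) := by
        rw [hDb i, smul_smul, inv_mul_cancel₀ (by exact_mod_cast hlamne), one_smul]
      rw [this]
      exact Submodule.smul_mem _ _ hDbi
    set f : s → W := fun i => ⟨b i, hmemW i⟩ with hfdef
    have hli : LinearIndependent ℂ f := by
      have hcomp : LinearIndependent ℂ (W.subtype ∘ f) := by
        have : (W.subtype ∘ f) = b ∘ (Subtype.val : s → Fin (Module.finrank ℂ 𝓗)) := rfl
        rw [this]
        exact b.orthonormal.linearIndependent.comp Subtype.val Subtype.val_injective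
      exact LinearIndependent.of_comp _ hcomp
    have := hli.fintype_card_le_finrank
    rw [Fintype.card_coe] at this
    omega
  -- assemble
  rw [my_traceNorm_symmetric_eq D hDsym]
  have hsum_eq : ∑ i, |hDsym.eigenvalues rfl i| = ∑ i ∈ s, |lam i| := by
    rw [← hlamdef]
    symm
    apply Finset.sum_subset (Finset.subset_univ s)
    intro i _ hi
    rw [hsdef, Finset.mem_filter] at hi
    push_neg at hi
    rw [hi (Finset.mem_univ i), abs_zero]
  rw [hsum_eq]
  have hCS : (∑ i ∈ s, |lam i|) ^ 2 ≤ 2 * (2 - 2 * t2) := by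
    have h1 := sq_sum_le_card_mul_sum_sq (s := s) (f := fun i => |lam i|)
    have h2 : ∑ i ∈ s, |lam i| ^ 2 ≤ ∑ i, (lam i) ^ 2 := by
      rw [show (∑ i ∈ s, |lam i| ^ 2) = ∑ i ∈ s, (lam i) ^ 2 from
        Finset.sum_congr rfl fun i _ => sq_abs _]
      exact Finset.sum_le_sum_of_subset_of_nonneg (Finset.subset_univ s)
        (fun i _ _ => sq_nonneg _)
    have h3 : (s.card : ℝ) ≤ 2 := by exact_mod_cast hcard
    have h4 : (0 : ℝ) ≤ ∑ i ∈ s, |lam i| ^ 2 :=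
      Finset.sum_nonneg fun i _ => sq_nonneg _
    calc (∑ i ∈ s, |lam i|) ^ 2 ≤ (s.card : ℝ) * ∑ i ∈ s, |lam i| ^ 2 := by exact_mod_cast h1
      _ ≤ 2 * ∑ i ∈ s, |lam i| ^ 2 := by nlinarith
      _ ≤ 2 * ∑ i, (lam i) ^ 2 := by linarith
      _ = 2 * (2 - 2 * t2) := by rw [hsumsq]
  have hnn : (0 : ℝ) ≤ ∑ i ∈ s, |lam i| := Finset.sum_nonneg fun i _ => abs_nonneg _
  have hrhs : 2 * (2 - 2 * t2) = (2 * Real.sqrt (1 - t2)) ^ 2 := by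
    rw [mul_pow, Real.sq_sqrt (by linarith)]
    ring
  rw [hrhs] at hCS
  have h2s : (0 : ℝ) ≤ 2 * Real.sqrt (1 - t2) := by positivity
  nlinarith


lemma my_two_eig_inner (T : 𝓗 →ₗ[ℂ] 𝓗) (u w : 𝓗) (hu : ‖u‖ = 1) (hw : ‖w‖ = 1)
    (huw : ⟪u, w⟫ = 0) (μ ν : ℝ) (hTu : T u = (μ : ℂ) • u) (hTw : T w = (ν : ℂ) • w)
    (a b : ℂ) :
    (⟪a • u + b • w, T (a • u + b • w)⟫ : ℂ)
      = ((‖a‖ ^ 2 * μ + ‖b‖ ^ 2 * ν : ℝ) : ℂ) := by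
  have hwu : ⟪w, u⟫ = 0 := by rw [← inner_conj_symm w u, huw, map_zero]
  have huu : (⟪u, u⟫ : ℂ) = 1 := by
    rw [inner_self_eq_norm_sq_to_K, hu]; norm_num
  have hww : (⟪w, w⟫ : ℂ) = 1 := by
    rw [inner_self_eq_norm_sq_to_K, hw]; norm_num
  rw [map_add, map_smul, map_smul, hTu, hTw]
  simp only [inner_add_left, inner_add_right, inner_smul_left, inner_smul_right,
    smul_smul, huw, hwu, huu, hww, mul_zero, mul_one, add_zero, zero_add]
  rw [show a * (μ : ℂ) * (starRingEnd ℂ) a = (μ : ℂ) * (a * (starRingEnd ℂ) a) by ring,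
      show b * (ν : ℂ) * (starRingEnd ℂ) b = (ν : ℂ) * (b * (starRingEnd ℂ) b) by ring,
      Complex.mul_conj, Complex.mul_conj]
  rw [Complex.normSq_eq_norm_sq, Complex.normSq_eq_norm_sq]
  push_cast
  ring

theorem approximate_parent_hamiltonian_is_gapped_parent_hamiltonian
    (hdim : 2 ≤ Module.finrank ℂ 𝓗) (Γ : ℕ) (hΓ : 0 < Γ)
    (G : 𝓗 →ₗ[ℂ] 𝓗) (hGsym : G.IsSymmetric)
    (ψ : 𝓗) (hψ : ‖ψ‖ = 1) (hGψ : G ψ = 0)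
    (heig : Module.finrank ℂ (Module.End.eigenspace G (0 : ℂ)) = 1)
    (hgap : ∀ μ : ℂ, Module.End.HasEigenvalue G μ → μ ≠ 0 → 1 ≤ μ.re)
    (hGnorm : endOpNorm G ≤ (Γ : ℝ))
    (δ' : ℝ) (hδ'0 : 0 < δ') (hδ'half : δ' < 1 / 2)
    (G' : 𝓗 →ₗ[ℂ] 𝓗) (hG'sym : G'.IsSymmetric)
    (happrox : endOpNorm (G - G') ≤ δ')
    (E₀' E₁' : ℝ)
    (hE0 : Module.End.HasEigenvalue G' (E₀' : ℂ))
    (hE0min : ∀ μ : ℂ, Module.End.HasEigenvalue G' μ → E₀' ≤ μ.re)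
    (hE1 : Module.End.HasEigenvalue G' (E₁' : ℂ))
    (hE1ne : E₁' ≠ E₀')
    (hE1min : ∀ μ : ℂ, Module.End.HasEigenvalue G' μ → μ ≠ (E₀' : ℂ) → E₁' ≤ μ.re) :
    (-δ' ≤ E₀' ∧ E₀' ≤ δ') ∧
    Module.finrank ℂ (Module.End.eigenspace G' (E₀' : ℂ)) = 1 ∧
    E₁' - E₀' ≥ 1 - 2 * δ' ∧
    (∀ ψ' : 𝓗, ‖ψ'‖ = 1 → G' ψ' = (E₀' : ℂ) • ψ' →
      (1 - δ' / (1 - δ') ≤ ‖(inner ℂ ψ ψ' : ℂ)‖ ∧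
       endTraceNorm (vecProj ψ - vecProj ψ') ≤ 2 * Real.sqrt (2 * δ' / (1 - δ')) ∧
       ∀ ρ : 𝓗 →ₗ[ℂ] 𝓗, ρ.IsSymmetric → (∀ v : 𝓗, 0 ≤ (inner ℂ v (ρ v) : ℂ).re) →
         LinearMap.trace ℂ 𝓗 ρ = 1 →
         1 - (inner ℂ ψ' (ρ ψ') : ℂ).re ≤
           ((LinearMap.trace ℂ 𝓗 (ρ ∘ₗ G')).re + δ') / (1 - 2 * δ'))) := by
  classical
  have hδ1 : (0:ℝ) < 1 - δ' := by linarith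
  have hδhalf : (0:ℝ) < 1 - 2*δ' := by linarith
  have hGabs : ∀ v : 𝓗, ‖v‖ = 1 → |(⟪v, (G - G') v⟫ : ℂ).re| ≤ δ' :=
    fun v hv => le_trans (my_re_inner_le_opnorm (G - G') v hv) happrox
  have hsplit : ∀ v : 𝓗, (⟪v, G v⟫ : ℂ).re = (⟪v, G' v⟫ : ℂ).re + (⟪v, (G - G') v⟫ : ℂ).re :=
    fun v => my_inner_sub_split G G' v
  have hE0le : E₀' ≤ δ' := by
    have h1 := my_rayleigh_lower G' hG'sym E₀' hE0min ψ hψ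
    have h2 : (⟪ψ, G ψ⟫ : ℂ).re = 0 := by rw [hGψ, inner_zero_right]; simp
    have h3 := abs_le.mp (hGabs ψ hψ)
    have h4 := hsplit ψ
    linarith
  have heigsand : ∀ (μ : ℝ) (v : 𝓗), ‖v‖ = 1 → G' v = (μ:ℂ) • v →
      (⟪v, G v⟫ : ℂ).re - δ' ≤ μ ∧ μ ≤ (⟪v, G v⟫ : ℂ).re + δ' := by
    intro μ v hv hev
    have h1' : (⟪v, G' v⟫ : ℂ).re = μ := by
      rw [my_eig_inner G' μ v hv hev, Complex.ofReal_re]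
    have h3 := abs_le.mp (hGabs v hv)
    have h4 := hsplit v
    constructor <;> linarith
  have hE0ge : -δ' ≤ E₀' := by
    obtain ⟨χ, hχn, hχe⟩ := my_exists_unit_eigenvector G' E₀' hE0
    have hlow := my_G_lower G hGsym ψ hψ hGψ heig hgap χ
    have hin : ‖(⟪ψ, χ⟫ : ℂ)‖ ≤ 1 := by
      have := norm_inner_le_norm (𝕜 := ℂ) ψ χ
      rw [hψ, hχn] at this; simpa using this
    have h2 : (0:ℝ) ≤ (⟪χ, G χ⟫ : ℂ).re := by
      rw [hχn] at hlow
      nlinarith [norm_nonneg (⟪ψ, χ⟫ : ℂ)]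
    have := (heigsand E₀' χ hχn hχe).1
    linarith
  -- part (ii)
  have heig2 : Module.finrank ℂ (Module.End.eigenspace G' (E₀' : ℂ)) = 1 := by
    obtain ⟨χ, hχn, hχe⟩ := my_exists_unit_eigenvector G' E₀' hE0
    have hχmem : χ ∈ Module.End.eigenspace G' (E₀' : ℂ) := Module.End.mem_eigenspace_iff.mpr hχe
    have hχ0 : χ ≠ 0 := by
      intro h; rw [h, norm_zero] at hχn; norm_num at hχn
    have hge1 : 0 < Module.finrank ℂ (Module.End.eigenspace G' (E₀' : ℂ)) := by
      rw [Module.finrank_pos_iff_exists_ne_zero]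
      exact ⟨⟨χ, hχmem⟩, by simpa [Submodule.mk_eq_zero] using hχ0⟩
    have hle1 : ¬ 2 ≤ Module.finrank ℂ (Module.End.eigenspace G' (E₀' : ℂ)) := by
      intro h2
      set E := Module.End.eigenspace G' (E₀' : ℂ) with hE
      set bE := stdOrthonormalBasis ℂ E with hbE
      set j0 : Fin (Module.finrank ℂ E) := ⟨0, by omega⟩ with hj0
      set j1 : Fin (Module.finrank ℂ E) := ⟨1, by omega⟩ with hj1
      have hj01 : j0 ≠ j1 := by
        rw [hj0, hj1]
        intro hcon
        have := Fin.mk.injEq 0 _ 1 _ ▸ hcon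
        simp [Fin.ext_iff] at hcon
      set u : 𝓗 := (bE j0 : 𝓗) with hu
      set w : 𝓗 := (bE j1 : 𝓗) with hwdef
      have hun : ‖u‖ = 1 := bE.orthonormal.1 j0
      have hwn : ‖w‖ = 1 := bE.orthonormal.1 j1
      have huw : ⟪u, w⟫ = 0 := by
        have h0 : (inner ℂ (bE j0) (bE j1) : ℂ) = 0 := bE.orthonormal.2 hj01
        rw [Submodule.coe_inner] at h0
        exact h0
      have heu : G' u = (E₀' : ℂ) • u := Module.End.mem_eigenspace_iff.mp (bE j0).2
      have hew : G' w = (E₀' : ℂ) • w := Module.End.mem_eigenspace_iff.mp (bE j1).2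
      obtain ⟨a, b, hab, hperp, hn1⟩ := my_exists_perp ψ u w hun hwn huw
      have hφe : G' (a • u + b • w) = (E₀' : ℂ) • (a • u + b • w) := by
        rw [map_add, map_smul, map_smul, heu, hew, smul_comm a, smul_comm b, ← smul_add]
      have hlow := my_G_lower G hGsym ψ hψ hGψ heig hgap (a • u + b • w)
      rw [hn1, hperp, norm_zero] at hlow
      have hlow2 : (1:ℝ) ≤ (⟪a • u + b • w, G (a • u + b • w)⟫ : ℂ).re := by nlinarith [hlow]
      have := (heigsand E₀' (a • u + b • w) hn1 hφe).1
      linarith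
    omega
  -- part (iii), proved up front since part (v) needs it
  have hE0E1 : E₀' ≤ E₁' := by
    have := hE0min (E₁' : ℂ) hE1
    rwa [Complex.ofReal_re] at this
  have hgap13 : E₁' - E₀' ≥ 1 - 2*δ' := by
    obtain ⟨χ0, hχ0n, hχ0e⟩ := my_exists_unit_eigenvector G' E₀' hE0
    obtain ⟨χ1, hχ1n, hχ1e⟩ := my_exists_unit_eigenvector G' E₁' hE1
    have horth : ⟪χ0, χ1⟫ = 0 := by
      have hs := hG'sym χ0 χ1
      rw [hχ0e, hχ1e, inner_smul_left, inner_smul_right, Complex.conj_ofReal] at hs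
      have hz : ((E₀' : ℂ) - (E₁' : ℂ)) * ⟪χ0, χ1⟫ = 0 := by
        rw [sub_mul, hs]; ring
      rcases mul_eq_zero.mp hz with h | h
      · exfalso
        apply hE1ne
        have h' : (E₀' : ℂ) = (E₁' : ℂ) := sub_eq_zero.mp h
        exact (by exact_mod_cast h' : E₀' = E₁').symm
      · exact h
    obtain ⟨a, b, hab, hperp, hn1⟩ := my_exists_perp ψ χ0 χ1 hχ0n hχ1n horth
    have hqre : (⟪a • χ0 + b • χ1, G' (a • χ0 + b • χ1)⟫ : ℂ).re
        = ‖a‖^2 * E₀' + ‖b‖^2 * E₁' := by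
      rw [my_two_eig_inner G' χ0 χ1 hχ0n hχ1n horth E₀' E₁' hχ0e hχ1e a b, Complex.ofReal_re]
    have hlow := my_G_lower G hGsym ψ hψ hGψ heig hgap (a • χ0 + b • χ1)
    rw [hn1, hperp, norm_zero] at hlow
    have hlow2 : (1:ℝ) ≤ (⟪a • χ0 + b • χ1, G (a • χ0 + b • χ1)⟫ : ℂ).re := by nlinarith [hlow]
    have h4 := hsplit (a • χ0 + b • χ1)
    have h3 := abs_le.mp (hGabs _ hn1)
    have h5 : ‖a‖^2 * E₀' + ‖b‖^2 * E₁' ≤ E₁' := by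
      nlinarith [mul_le_mul_of_nonneg_left hE0E1 (sq_nonneg (‖a‖ : ℝ)), sq_nonneg (‖b‖ : ℝ)]
    rw [hqre] at h4
    have hE1low : 1 - δ' ≤ E₁' := by linarith [hlow2, h3.2, h5]
    linarith [hE0le]
  refine ⟨⟨hE0ge, hE0le⟩, heig2, hgap13, ?_⟩
  -- parts (iv) and (v)
  intro ψ' hψ'n hψ'e
  have htnn : (0:ℝ) ≤ ‖(⟪ψ, ψ'⟫ : ℂ)‖ := norm_nonneg _
  have htle : ‖(⟪ψ, ψ'⟫ : ℂ)‖ ≤ 1 := by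
    have := norm_inner_le_norm (𝕜 := ℂ) ψ ψ'
    rw [hψ, hψ'n] at this; simpa using this
  have hlow := my_G_lower G hGsym ψ hψ hGψ heig hgap ψ'
  rw [hψ'n] at hlow
  have h4 := hsplit ψ'
  have h3 := abs_le.mp (hGabs ψ' hψ'n)
  have h1' : (⟪ψ', G' ψ'⟫ : ℂ).re = E₀' := by
    rw [my_eig_inner G' E₀' ψ' hψ'n hψ'e, Complex.ofReal_re]
  have ht2 : 1 - 2*δ' ≤ ‖(⟪ψ, ψ'⟫ : ℂ)‖^2 := by
    rw [h1'] at h4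
    nlinarith [hE0le]
  refine ⟨?_, ?_, ?_⟩
  · -- overlap bound
    set t : ℝ := ‖(⟪ψ, ψ'⟫ : ℂ)‖ with ht
    have heq : 1 - δ' / (1 - δ') = (1 - 2*δ') / (1 - δ') := by
      field_simp
      ring
    rw [heq, div_le_iff₀ hδ1]
    have hA : (1-2*δ') ≤ (1-δ')^2 := by nlinarith [sq_nonneg δ']
    have hC : (1-2*δ')^2 ≤ (t*(1-δ'))^2 := by nlinarith
    nlinarith [mul_nonneg htnn hδ1.le]
  · -- trace norm bound
    have htr := my_traceNorm_diff_le ψ ψ' hψ hψ'n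
    have hle : 1 - ‖(⟪ψ, ψ'⟫ : ℂ)‖^2 ≤ 2*δ'/(1-δ') := by
      rw [le_div_iff₀ hδ1]
      nlinarith
    calc endTraceNorm (vecProj ψ - vecProj ψ')
        ≤ 2 * Real.sqrt (1 - ‖(⟪ψ, ψ'⟫ : ℂ)‖^2) := htr
      _ ≤ 2 * Real.sqrt (2*δ'/(1-δ')) := by
          have := Real.sqrt_le_sqrt hle
          linarith
  · -- part (v)
    intro ρ hρsym hρpos hρtr
    set b' := hG'sym.eigenvectorBasis rfl with hb'
    set lam' := hG'sym.eigenvalues rfl with hlam'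
    have hTb' : ∀ i, G' (b' i) = (lam' i : ℂ) • b' i :=
      fun i => hG'sym.apply_eigenvectorBasis rfl i
    obtain ⟨i0, hi0, huniq, hcomp, hn1⟩ :=
      my_unique_index b' G' lam' hTb' E₀' heig2 ψ' hψ'n hψ'e
    set r : Fin (Module.finrank ℂ 𝓗) → ℝ := fun i => (⟪b' i, ρ (b' i)⟫ : ℂ).re with hrdef
    have hrnn : ∀ i, 0 ≤ r i := fun i => hρpos (b' i)
    have hsumr : ∑ i, r i = 1 := by
      have h := (my_trace_eq_sum_inner b' ρ).symm.trans hρtr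
      have h2 := congrArg Complex.re h
      rw [Complex.re_sum] at h2
      simpa [hrdef] using h2
    have hψ'c : ψ' = (⟪b' i0, ψ'⟫ : ℂ) • b' i0 := by
      conv_lhs => rw [← b'.sum_repr' ψ']
      rw [Finset.sum_eq_single i0]
      · intro j _ hj; rw [hcomp j hj, zero_smul]
      · simp
    have hr0 : (⟪ψ', ρ ψ'⟫ : ℂ).re = r i0 := by
      conv_lhs => rw [hψ'c]
      rw [map_smul, inner_smul_left, inner_smul_right]
      have hcc : ((starRingEnd ℂ) (⟪b' i0, ψ'⟫ : ℂ)) * ((⟪b' i0, ψ'⟫ : ℂ) * ⟪b' i0, ρ (b' i0)⟫)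
          = ⟪b' i0, ρ (b' i0)⟫ := by
        rw [← mul_assoc, my_conj_mul _ _ rfl, hn1]
        norm_num
      rw [hcc]
    have htrG : (LinearMap.trace ℂ 𝓗 (ρ ∘ₗ G')).re = ∑ i, lam' i * r i := by
      rw [my_trace_eq_sum_inner b' (ρ ∘ₗ G'), Complex.re_sum]
      apply Finset.sum_congr rfl
      intro i _
      rw [LinearMap.comp_apply, hTb' i, map_smul, inner_smul_right]
      exact Complex.re_ofReal_mul _ _
    have hr0le : r i0 ≤ 1 := by
      rw [← hsumr]
      exact Finset.single_le_sum (fun i _ => hrnn i) (Finset.mem_univ i0)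
    have herase : ∑ i ∈ Finset.univ.erase i0, r i = 1 - r i0 := by
      have h1 := Finset.add_sum_erase Finset.univ r (Finset.mem_univ i0)
      rw [hsumr] at h1; linarith
    have hlamge : ∀ i ∈ Finset.univ.erase i0, E₁' ≤ lam' i := by
      intro i hi
      have hne : lam' i ≠ E₀' := huniq i (Finset.ne_of_mem_erase hi)
      have := hE1min (lam' i : ℂ) (hG'sym.hasEigenvalue_eigenvalues rfl i)
        (by exact_mod_cast hne)
      rwa [Complex.ofReal_re] at this
    have htrlow : E₀' * r i0 + E₁' * (1 - r i0) ≤ ∑ i, lam' i * r i := by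
      rw [← Finset.add_sum_erase Finset.univ _ (Finset.mem_univ i0), hi0]
      have hs : ∑ i ∈ Finset.univ.erase i0, E₁' * r i
          ≤ ∑ i ∈ Finset.univ.erase i0, lam' i * r i := by
        apply Finset.sum_le_sum
        intro i hi
        exact mul_le_mul_of_nonneg_right (hlamge i hi) (hrnn i)
      rw [← Finset.mul_sum, herase] at hs
      linarith
    rw [hr0, le_div_iff₀ hδhalf, htrG]
    have hkey : 0 ≤ (E₁' - E₀' - (1-2*δ')) * (1 - r i0) :=
      mul_nonneg (by linarith) (by linarith)
    nlinarith [htrlow, hE0ge]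

end
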